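/- Entropy decomposition for Theorem 5's upload cost: with S ~ Uniform(B_{w,M}), m ~ Uniform([M]) independent of S, Q₁ = S, and Q₂ = S + e_m, the sum H(Q₁) + H(Q₂) = log₂ C(M,w) + y(w,M), where y(w,M) = log₂ C(M,w) + log₂ M − ((M−w)/M) log₂(w+1) − (w/M) log₂(M−w+1). Equivalently, H(Q₂) = log₂ M + log₂ C(M,w) − ((M−w)/M) log₂(w+1) − (w/M) log₂(M−w+1). -/

import Mathlib

open Finset Real

/-- Hamming weight of a binary vector. -/
def wt {M : ℕ} (v : Fin M → Bool) : ℕ := (Finset.univ.filter fun i => v i = true).card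

/-- The set `B_{w,M}` of binary length-`M` vectors of Hamming weight `w`. -/
def Bw (M w : ℕ) : Finset (Fin M → Bool) := Finset.univ.filter fun v => wt v = w

/-- Flip coordinate `m` of the binary vector `v` (addition of `e_m` over GF(2)). -/
def flipAt {M : ℕ} (v : Fin M → Bool) (m : Fin M) : Fin M → Bool :=
  Function.update v m (!v m)

/-- Joint distribution of `(m, Q₂)` in the `(M,2)` Scheme 2 with
`S ~ Uniform(B_{w,M})`, `m ~ Uniform([M])` independent of `S`, and `Q₂ = S + e_m`:
`P(m, q) = (1/M)(1/|B_{w,M}|)` if flipping coordinate `m` of `q` lands in `B_{w,M}`,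
else `0`. -/
noncomputable def jointP (M w : ℕ) (m : Fin M) (q : Fin M → Bool) : ℝ :=
  (M : ℝ)⁻¹ * ((Bw M w).card : ℝ)⁻¹ * (if flipAt q m ∈ Bw M w then 1 else 0)

/-- Marginal distribution of the query `Q₂`. -/
noncomputable def margQ (M w : ℕ) (q : Fin M → Bool) : ℝ := ∑ m : Fin M, jointP M w m q

/-- Conditional entropy `H(m | Q₂ = q)` in bits. -/
noncomputable def condH (M w : ℕ) (q : Fin M → Bool) : ℝ :=
  -∑ m : Fin M, (jointP M w m q / margQ M w q) *
      Real.logb 2 (jointP M w m q / margQ M w q)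

/-! The law of `Q₂` depends only on the weight of `q`: a vector of weight `w + 1` is reached by
flipping any of its `w + 1` ones, a vector of weight `w - 1` by flipping any of its `M - w + 1`
zeros, and nothing else is reached. Hence, with `C = C(M,w)`, `P(Q₂ = q)` is `(w+1)/(M C)` resp.
`(M-w+1)/(M C)` on these two weight classes, which by `C(M,w+1)(w+1) = (M-w) C` carry total mass
`(M-w)/M` resp. `w/M`, and the entropy is read off. -/

section Weight

variable {M : ℕ}

lemma wt_flipAt_add_one_of_true {q : Fin M → Bool} {m : Fin M} (h : q m = true) :
    wt (flipAt q m) + 1 = wt q := by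
  have hsupp : univ.filter (flipAt q m · = true) = (univ.filter (q · = true)).erase m := by
    ext i
    by_cases hi : i = m <;> simp [flipAt, Function.update_apply, hi, h]
  rw [wt, hsupp]
  exact card_erase_add_one (by simp [h])

lemma wt_flipAt_of_false {q : Fin M → Bool} {m : Fin M} (h : q m = false) :
    wt (flipAt q m) = wt q + 1 := by
  have hsupp : univ.filter (flipAt q m · = true) = insert m (univ.filter (q · = true)) := by
    ext i
    by_cases hi : i = m <;> simp [flipAt, Function.update_apply, hi, h]
  rw [wt, hsupp, card_insert_of_notMem (by simp [h]), wt]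

lemma card_filter_eq_false_add_wt (q : Fin M → Bool) : #{m | q m = false} + wt q = M := by
  simpa [wt, add_comm] using card_filter_add_card_filter_not (s := univ) (fun m => q m = true)

lemma card_filter_wt_eq (M k : ℕ) : #{v : Fin M → Bool | wt v = k} = M.choose k := by
  rw [show M.choose k = #(powersetCard k (univ : Finset (Fin M))) by simp]
  refine card_nbij' (fun v => univ.filter (v · = true)) (fun s i => decide (i ∈ s)) ?_ ?_ ?_ ?_
  · intro v hv
    simpa [wt] using mem_filter.mp (mem_coe.mp hv)
  · intro s hs
    simp only [mem_coe, mem_powersetCard] at hs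
    refine mem_coe.mpr (mem_filter.mpr ⟨mem_univ _, ?_⟩)
    simpa [wt] using hs.2
  · intro v _
    funext i
    simp
  · intro s _
    ext i
    simp

lemma card_Bw (M w : ℕ) : #(Bw M w) = M.choose w := card_filter_wt_eq M w

lemma flipAt_mem_Bw_iff {w : ℕ} {q : Fin M → Bool} {m : Fin M} :
    flipAt q m ∈ Bw M w ↔ (q m = true ∧ wt q = w + 1) ∨ (q m = false ∧ wt q + 1 = w) := by
  cases hq : q m
  · have := wt_flipAt_of_false hq
    simp [Bw]
    omega
  · have := wt_flipAt_add_one_of_true hq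
    simp [Bw]
    omega

end Weight

section Marginal

variable {M w : ℕ}

lemma margQ_eq_card_div (q : Fin M → Bool) :
    margQ M w q = (#{m | flipAt q m ∈ Bw M w} : ℝ) / (M * M.choose w) := by
  rw [margQ, div_eq_mul_inv, mul_inv, mul_comm]
  simp only [jointP, ← mul_sum, sum_boole, card_Bw]

lemma margQ_of_wt_eq_add_one {q : Fin M → Bool} (h : wt q = w + 1) :
    margQ M w q = (w + 1) / (M * M.choose w) := by
  have hflip : univ.filter (flipAt q · ∈ Bw M w) = univ.filter (q · = true) := by
    ext m
    simp [flipAt_mem_Bw_iff, h, show w + 1 + 1 ≠ w by omega]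
  rw [margQ_eq_card_div, hflip, ← wt, h]
  push_cast
  rfl

lemma margQ_of_wt_add_one_eq {q : Fin M → Bool} (h : wt q + 1 = w) :
    margQ M w q = (M - w + 1) / (M * M.choose w) := by
  have hflip : univ.filter (flipAt q · ∈ Bw M w) = univ.filter (q · = false) := by
    ext m
    simp [flipAt_mem_Bw_iff, h, show wt q ≠ w + 1 by omega]
  have hcard : (#{m | q m = false} : ℝ) = M - w + 1 := by
    have hM : (#{m | q m = false} : ℝ) + wt q = M := by
      exact_mod_cast card_filter_eq_false_add_wt q
    have hw : (wt q : ℝ) + 1 = w := by exact_mod_cast h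
    linarith
  rw [margQ_eq_card_div, hflip, hcard]

lemma margQ_eq_zero {q : Fin M → Bool} (h₁ : wt q ≠ w + 1) (h₂ : wt q + 1 ≠ w) :
    margQ M w q = 0 := by
  rw [margQ_eq_card_div, filter_false_of_mem (by simp [flipAt_mem_Bw_iff, h₁, h₂])]
  simp

end Marginal

section Mass

variable {M w : ℕ}

lemma cast_choose_succ_mul (hw : w ≤ M) :
    (M.choose (w + 1) : ℝ) * (w + 1) = (M - w) * M.choose w := by
  have h := congrArg (Nat.cast : ℕ → ℝ) (Nat.choose_succ_right_eq M w)
  push_cast [Nat.cast_sub hw] at h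
  linarith

lemma cast_card_wt_add_one_eq_mul (hw : w ≤ M) :
    (#{q : Fin M → Bool | wt q + 1 = w} : ℝ) * (M - w + 1) = w * M.choose w := by
  cases w with
  | zero => simp
  | succ v =>
    have h := cast_choose_succ_mul (M := M) (w := v) (by omega)
    simp only [Nat.add_right_cancel_iff, card_filter_wt_eq]
    push_cast
    linarith

lemma sum_wt_eq_add_one_margQ_mul_logb (hw : w ≤ M) :
    ∑ q ∈ {q : Fin M → Bool | wt q = w + 1}, margQ M w q * logb 2 (margQ M w q)
      = (M - w) / M * logb 2 ((w + 1) / (M * M.choose w)) := by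
  have hC : (M.choose w : ℝ) ≠ 0 := by exact_mod_cast (Nat.choose_pos hw).ne'
  rw [sum_congr rfl fun q hq => by rw [margQ_of_wt_eq_add_one (mem_filter.mp hq).2],
    sum_const, nsmul_eq_mul, card_filter_wt_eq, ← mul_assoc, mul_div_assoc',
    cast_choose_succ_mul hw, mul_div_mul_right _ _ hC]

lemma sum_wt_add_one_eq_margQ_mul_logb (hw : w ≤ M) :
    ∑ q ∈ {q : Fin M → Bool | wt q + 1 = w}, margQ M w q * logb 2 (margQ M w q)
      = w / M * logb 2 ((M - w + 1) / (M * M.choose w)) := by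
  have hC : (M.choose w : ℝ) ≠ 0 := by exact_mod_cast (Nat.choose_pos hw).ne'
  rw [sum_congr rfl fun q hq => by rw [margQ_of_wt_add_one_eq (mem_filter.mp hq).2],
    sum_const, nsmul_eq_mul, ← mul_assoc, mul_div_assoc',
    cast_card_wt_add_one_eq_mul hw, mul_div_mul_right _ _ hC]

lemma sum_margQ_mul_logb (hw : w ≤ M) :
    ∑ q, margQ M w q * logb 2 (margQ M w q)
      = (M - w) / M * logb 2 ((w + 1) / (M * M.choose w))
        + w / M * logb 2 ((M - w + 1) / (M * M.choose w)) := by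
  have hdisj : Disjoint (univ.filter fun q : Fin M → Bool => wt q = w + 1)
      (univ.filter fun q => wt q + 1 = w) :=
    disjoint_filter.mpr fun _ _ h => by omega
  rw [← sum_subset (subset_univ _), sum_union hdisj, sum_wt_eq_add_one_margQ_mul_logb hw,
    sum_wt_add_one_eq_margQ_mul_logb hw]
  intro q _ hq
  simp only [mem_union, mem_filter, mem_univ, true_and, not_or] at hq
  rw [margQ_eq_zero hq.1 hq.2, zero_mul]

end Mass

/-- Upload-cost entropy decomposition for Theorem 5: with `S ~ Uniform(B_{w,M})`,
`m ~ Uniform([M])` independent of `S`, `Q₁ = S` and `Q₂ = S + e_m`, we have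
`H(Q₁) = log₂ C(M,w)` and
`H(Q₂) = log₂ M + log₂ C(M,w) - ((M-w)/M) log₂(w+1) - (w/M) log₂(M-w+1)`, so that
`H(Q₁) + H(Q₂) = log₂ C(M,w) + y(w,M)`. -/
theorem scheme2_upload_entropy (M w : ℕ) (hM : 1 ≤ M) (hw : w ≤ M) :
    (-∑ q : Fin M → Bool, margQ M w q * Real.logb 2 (margQ M w q))
        = Real.logb 2 (M : ℝ) + Real.logb 2 (Nat.choose M w : ℝ)
            - (((M : ℝ) - (w : ℝ)) / (M : ℝ)) * Real.logb 2 ((w : ℝ) + 1)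
            - ((w : ℝ) / (M : ℝ)) * Real.logb 2 ((M : ℝ) - (w : ℝ) + 1) ∧
    Real.logb 2 (Nat.choose M w : ℝ)
        + (-∑ q : Fin M → Bool, margQ M w q * Real.logb 2 (margQ M w q))
      = Real.logb 2 (Nat.choose M w : ℝ)
          + (Real.logb 2 (Nat.choose M w : ℝ) + Real.logb 2 (M : ℝ)
              - (((M : ℝ) - (w : ℝ)) / (M : ℝ)) * Real.logb 2 ((w : ℝ) + 1)
              - ((w : ℝ) / (M : ℝ)) * Real.logb 2 ((M : ℝ) - (w : ℝ) + 1)) := by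
  have hM₀ : (M : ℝ) ≠ 0 := Nat.cast_ne_zero.mpr (by omega)
  have hC : (M.choose w : ℝ) ≠ 0 := by exact_mod_cast (Nat.choose_pos hw).ne'
  have hwM : (w : ℝ) ≤ M := by exact_mod_cast hw
  have hH₂ : -∑ q : Fin M → Bool, margQ M w q * logb 2 (margQ M w q)
      = logb 2 M + logb 2 (M.choose w) - (M - w) / M * logb 2 (w + 1)
        - w / M * logb 2 (M - w + 1) := by
    rw [sum_margQ_mul_logb hw, logb_div (by positivity) (by positivity),
      logb_div (by linarith) (by positivity), logb_mul hM₀ hC]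
    field_simp
    ring
  exact ⟨hH₂, by rw [hH₂]; ring⟩
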